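/- Let Γ be a Coxeter graph, G a group of symmetries of Γ with all orbits of S finite, and Φ the canonical root system. Then the following are equivalent: (a) every positive root α ∈ Φ⁺ equals w(α_s) for some w ∈ W^G and s ∈ S; (b) every root α ∈ Φ equals w(α_s) for some w ∈ W^G and s ∈ S. -/

import Mathlib

open Real

/-- A Coxeter matrix on the set `S`, with `0` representing the label `∞`. -/
structure CoxeterMat (S : Type*) where
  m : S → S → ℕ
  diagonal : ∀ s, m s s = 1
  symmetric : ∀ s t, m s t = m t s
  off_diagonal : ∀ s t, s ≠ t → m s t ≠ 1

namespace CoxeterMat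

variable {S : Type*} (M : CoxeterMat S)

/-- The coefficient `⟨α_s, α_t⟩ = -2 cos (π / m_{s,t})`, with value `-2` when `m_{s,t} = ∞`. -/
noncomputable def c (s t : S) : ℝ :=
  if M.m s t = 0 then -2 else -2 * Real.cos (Real.pi / (M.m s t : ℝ))

/-- The simple root `α_s` in `V = ⊕_{s ∈ S} ℝ α_s`. -/
noncomputable def sroot (s : S) : S →₀ ℝ := Finsupp.single s 1

/-- The canonical bilinear form of the Coxeter graph. -/
noncomputable def bform : (S →₀ ℝ) →ₗ[ℝ] (S →₀ ℝ) →ₗ[ℝ] ℝ :=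
  Finsupp.lift _ ℝ S fun s => Finsupp.lift ℝ ℝ S fun t => M.c s t

/-- The simple reflection `σ_s : x ↦ x - ⟨α_s, x⟩ α_s`. -/
noncomputable def sigma (s : S) : (S →₀ ℝ) →ₗ[ℝ] (S →₀ ℝ) :=
  LinearMap.id - (M.bform (sroot s)).smulRight (sroot s)

/-- The Coxeter group `W`, realized as the subgroup of linear automorphisms of `V`
generated by the simple reflections. -/
noncomputable def Wgrp : Subgroup ((S →₀ ℝ) ≃ₗ[ℝ] (S →₀ ℝ)) :=
  Subgroup.closure {w | ∃ s : S, (w : (S →₀ ℝ) →ₗ[ℝ] (S →₀ ℝ)) = M.sigma s}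

/-- The canonical root system `Φ = {w(α_s) | w ∈ W, s ∈ S}`. -/
def Phi : Set (S →₀ ℝ) := {b | ∃ w ∈ M.Wgrp, ∃ s : S, b = w (sroot s)}

/-- The set of positive roots. -/
def PhiPos : Set (S →₀ ℝ) := {b | b ∈ M.Phi ∧ ∀ s, 0 ≤ b s}

/-- The equivalence relation `≡` on `Φ` generated by `α ≡₁ β ⟺ ⟨α, β⟩ ∉ {0, 1, -1}`. -/
def equivR : (S →₀ ℝ) → (S →₀ ℝ) → Prop :=
  Relation.EqvGen (fun a b => a ∈ M.Phi ∧ b ∈ M.Phi ∧ M.bform a b ∉ ({0, 1, -1} : Set ℝ))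

/-- The underlying graph of the Coxeter graph: `s` and `t` are joined iff `m_{s,t} ≥ 3`
(including `m_{s,t} = ∞`). -/
def graph : SimpleGraph S where
  Adj s t := s ≠ t ∧ M.m s t ≠ 2
  symm := ⟨fun s t h => ⟨h.1.symm, by rw [M.symmetric]; exact h.2⟩⟩
  loopless := ⟨fun s h => h.1 rfl⟩

/-- The action of a permutation of `S` on `V`. -/
noncomputable def permV (g : Equiv.Perm S) : (S →₀ ℝ) ≃ₗ[ℝ] (S →₀ ℝ) :=
  Finsupp.domLCongr g

/-- The set of elements of `W` fixed by the group `G` of symmetries (acting by conjugation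
by the corresponding permutations of coordinates). -/
noncomputable def WfixG (G : Subgroup (Equiv.Perm S)) :
    Set ((S →₀ ℝ) ≃ₗ[ℝ] (S →₀ ℝ)) :=
  {w | w ∈ M.Wgrp ∧ ∀ g ∈ G, permV g * w = w * permV g}

/-- Construct a simply laced Coxeter matrix from an adjacency relation. -/
noncomputable def ofAdj (A : S → S → Prop) (hs : ∀ s t, A s t → A t s)
    (hi : ∀ s, ¬ A s s) : CoxeterMat S where
  m s t := open Classical in if s = t then 1 else if A s t then 3 else 2
  diagonal s := by simp
  symmetric s t := by
    classical
    by_cases h : s = t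
    · subst h; rfl
    · have h' : t ≠ s := Ne.symm h
      simp only [if_neg h, if_neg h']
      by_cases hA : A s t
      · rw [if_pos hA, if_pos (hs s t hA)]
      · rw [if_neg hA, if_neg (fun h2 => hA (hs t s h2))]
  off_diagonal s t h := by
    classical
    simp only [if_neg h]
    split <;> norm_num

/-- Isomorphism of Coxeter graphs. -/
def Iso {T : Type*} (M : CoxeterMat S) (N : CoxeterMat T) : Prop :=
  ∃ e : S ≃ T, ∀ s t, N.m (e s) (e t) = M.m s t

/-- The full Coxeter subgraph spanned by `Y ⊆ S`. -/
def restrict (Y : Set S) : CoxeterMat Y where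
  m s t := M.m s t
  diagonal s := M.diagonal s
  symmetric s t := M.symmetric s t
  off_diagonal s t h := M.off_diagonal s t (fun hh => h (Subtype.ext hh))

end CoxeterMat

open CoxeterMat

/-- The Coxeter graph `A_n`: a path with `n` vertices. -/
noncomputable def pathA (n : ℕ) : CoxeterMat (Fin n) :=
  ofAdj (fun i j => i.val + 1 = j.val ∨ j.val + 1 = i.val)
    (fun _ _ h => h.symm)
    (fun s h => by rcases h with h | h <;> omega)

/-- The Coxeter graph `D_n`: a path `0 — 1 — ⋯ — (n-2)` together with an extra vertex `n-1`
joined to `n-3`. -/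
noncomputable def Dmat (n : ℕ) : CoxeterMat (Fin n) :=
  ofAdj (fun i j => i ≠ j ∧
      (((i.val + 1 = j.val ∧ j.val ≤ n - 2) ∨ (i.val + 2 = j.val ∧ j.val = n - 1)) ∨
       ((j.val + 1 = i.val ∧ i.val ≤ n - 2) ∨ (j.val + 2 = i.val ∧ i.val = n - 1))))
    (fun _ _ h => ⟨h.1.symm, h.2.symm⟩)
    (fun s h => h.1 rfl)

/-- Adjacency relation determined by a list of edges. -/
def listAdj {n : ℕ} (L : List (Fin n × Fin n)) (i j : Fin n) : Prop :=
  (i, j) ∈ L ∨ (j, i) ∈ L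

instance {n : ℕ} (L : List (Fin n × Fin n)) (i j : Fin n) : Decidable (listAdj L i j) := by
  unfold listAdj; infer_instance

/-- The Coxeter graph `E₆`. -/
noncomputable def E6mat : CoxeterMat (Fin 6) :=
  ofAdj (listAdj [(0,2),(2,3),(3,4),(4,5),(1,3)])
    (fun _ _ h => h.symm) (by decide)

/-- The Coxeter graph `E₇`. -/
noncomputable def E7mat : CoxeterMat (Fin 7) :=
  ofAdj (listAdj [(0,2),(2,3),(3,4),(4,5),(5,6),(1,3)])
    (fun _ _ h => h.symm) (by decide)

/-- The Coxeter graph `E₈`. -/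
noncomputable def E8mat : CoxeterMat (Fin 8) :=
  ofAdj (listAdj [(0,2),(2,3),(3,4),(4,5),(5,6),(6,7),(1,3)])
    (fun _ _ h => h.symm) (by decide)

/-- The Coxeter graph `A_∞`: the one-sided infinite path. -/
noncomputable def Ainf : CoxeterMat ℕ :=
  ofAdj (fun i j => i + 1 = j ∨ j + 1 = i)
    (fun _ _ h => h.symm)
    (fun s h => by omega)

/-- The Coxeter graph `_∞A_∞`: the two-sided infinite path. -/
noncomputable def ZAinf : CoxeterMat ℤ :=
  ofAdj (fun i j => i + 1 = j ∨ j + 1 = i)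
    (fun _ _ h => h.symm)
    (fun s h => by omega)

/-- The Coxeter graph `D_∞`: vertices `0, 1, 2, 3, …` with `0` and `1` joined to `2` and a
path `2 — 3 — 4 — ⋯`. -/
noncomputable def Dinf : CoxeterMat ℕ :=
  ofAdj (fun i j => i ≠ j ∧
      (((i = 0 ∧ j = 2) ∨ (i = 1 ∧ j = 2) ∨ (i + 1 = j ∧ 2 ≤ i)) ∨
       ((j = 0 ∧ i = 2) ∨ (j = 1 ∧ i = 2) ∨ (j + 1 = i ∧ 2 ≤ j))))
    (fun _ _ h => ⟨h.1.symm, h.2.symm⟩)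
    (fun s h => h.1 rfl)

/-- The affine Coxeter graph `Ã_n`: a cycle with `n + 1` vertices. -/
noncomputable def affA (n : ℕ) : CoxeterMat (ZMod (n + 1)) :=
  ofAdj (fun i j => i ≠ j ∧ (i + 1 = j ∨ j + 1 = i))
    (fun _ _ h => ⟨h.1.symm, h.2.symm⟩)
    (fun s h => h.1 rfl)

/-- The affine Coxeter graph `D̃_n` (on `n + 1` vertices, Bourbaki numbering): `0` and `1`
joined to `2`, a path `2 — 3 — ⋯ — (n-1)`, and `n` joined to `n-2`. -/
noncomputable def affD (n : ℕ) : CoxeterMat (Fin (n + 1)) :=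
  ofAdj (fun i j => i ≠ j ∧
      (((i.val = 0 ∧ j.val = 2) ∨ (i.val = 1 ∧ j.val = 2) ∨
        (i.val + 1 = j.val ∧ 2 ≤ i.val ∧ i.val ≤ n - 2) ∨
        (i.val = n - 2 ∧ j.val = n)) ∨
       ((j.val = 0 ∧ i.val = 2) ∨ (j.val = 1 ∧ i.val = 2) ∨
        (j.val + 1 = i.val ∧ 2 ≤ j.val ∧ j.val ≤ n - 2) ∨
        (j.val = n - 2 ∧ i.val = n))))
    (fun _ _ h => ⟨h.1.symm, h.2.symm⟩)
    (fun s h => h.1 rfl)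

/-- The affine Coxeter graph `Ẽ₆` (Bourbaki numbering, affine vertex `0`). -/
noncomputable def affE6 : CoxeterMat (Fin 7) :=
  ofAdj (listAdj [(1,3),(3,4),(4,5),(5,6),(2,4),(0,2)])
    (fun _ _ h => h.symm) (by decide)

/-- The affine Coxeter graph `Ẽ₇` (Bourbaki numbering, affine vertex `0`). -/
noncomputable def affE7 : CoxeterMat (Fin 8) :=
  ofAdj (listAdj [(0,1),(1,3),(3,4),(4,5),(5,6),(6,7),(2,4)])
    (fun _ _ h => h.symm) (by decide)

/-- The affine Coxeter graph `Ẽ₈` (Bourbaki numbering, affine vertex `0`). -/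
noncomputable def affE8 : CoxeterMat (Fin 9) :=
  ofAdj (listAdj [(1,3),(3,4),(4,5),(5,6),(6,7),(7,8),(2,4),(0,8)])
    (fun _ _ h => h.symm) (by decide)

/-! Every root is positive or negative: the geometric representation of the abstract Coxeter
group satisfies `ℓ(x s_t) > ℓ(x) → x(α_t) ≥ 0` (Humphreys' argument, by induction on `ℓ(x)` via
rank-two parabolic subgroups). Hence (b) follows from (a) once every `s` admits `u ∈ W^G` with
`u(α_s) = -α_s`. Under (a), two distinct vertices `t`, `g t` of a `G`-orbit `X` are never joined:
otherwise the positive root `σ_t(α_{g t}) = w(α_r)` with `w ∈ W^G` would write `α_r` as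
`w⁻¹(α_{g t}) - c_{t, g t} w⁻¹(α_t)`, a combination with nonnegative coefficients of two roots
that have the same sign (they are exchanged by `g`), which is impossible. So the reflections
`σ_t`, `t ∈ X`, commute, and their product `u_X` is `G`-invariant with `u_X(α_s) = -α_s`. -/

/-- `chebU a k = U_{k-1}(a / 2)`, a Chebyshev polynomial of the second kind. -/
noncomputable def chebU (a : ℝ) : ℕ → ℝ
  | 0 => 0
  | 1 => 1
  | k + 2 => a * chebU a (k + 1) - chebU a k

lemma chebU_add_two (a : ℝ) (k : ℕ) : chebU a (k + 2) = a * chebU a (k + 1) - chebU a k := rfl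

lemma chebU_two (k : ℕ) : chebU 2 k = k := by
  induction k using Nat.twoStepInduction with
  | zero => simp [chebU]
  | one => simp [chebU]
  | more k ih₁ ih₂ =>
      rw [chebU_add_two, ih₁, ih₂]
      push_cast
      ring

lemma chebU_two_mul_cos_mul_sin (θ : ℝ) (k : ℕ) :
    chebU (2 * Real.cos θ) k * Real.sin θ = Real.sin (k * θ) := by
  induction k using Nat.twoStepInduction with
  | zero => simp [chebU]
  | one => simp [chebU]
  | more k ih₁ ih₂ =>
      have e : Real.sin ((k + 2 : ℕ) * θ) = 2 * Real.cos θ * Real.sin ((k + 1 : ℕ) * θ)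
          - Real.sin (k * θ) := by
        have h₁ : ((k + 2 : ℕ) : ℝ) * θ = (k + 1 : ℕ) * θ + θ := by push_cast; ring
        have h₂ : (k : ℝ) * θ = (k + 1 : ℕ) * θ - θ := by push_cast; ring
        rw [h₁, h₂, Real.sin_add, Real.sin_sub]
        ring
      rw [e, chebU_add_two, ← ih₁, ← ih₂]
      ring

section

variable {m : ℕ}

lemma sin_pi_div_pos (hm : 2 ≤ m) : 0 < Real.sin (π / m) := by
  have h2 : (2 : ℝ) ≤ m := by exact_mod_cast hm
  apply Real.sin_pos_of_pos_of_lt_pi (by positivity)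
  rw [div_lt_iff₀ (by linarith)]
  nlinarith [pi_pos]

lemma chebU_two_mul_cos_nonneg (hm : 2 ≤ m) {k : ℕ} (hk : k ≤ m) :
    0 ≤ chebU (2 * Real.cos (π / m)) k := by
  have hsin : 0 ≤ Real.sin (k * (π / m)) := by
    have hk' : (k : ℝ) ≤ m := by exact_mod_cast hk
    have hm' : (0 : ℝ) < m := by exact_mod_cast (by omega : 0 < m)
    apply Real.sin_nonneg_of_nonneg_of_le_pi (by positivity)
    rw [mul_div_assoc', div_le_iff₀ hm']
    nlinarith [pi_pos]
  rw [← chebU_two_mul_cos_mul_sin] at hsin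
  exact nonneg_of_mul_nonneg_left hsin (sin_pi_div_pos hm)

lemma chebU_two_mul_cos_two_mul (hm : 2 ≤ m) : chebU (2 * Real.cos (π / m)) (2 * m) = 0 := by
  have h := chebU_two_mul_cos_mul_sin (π / m) (2 * m)
  have hm' : (m : ℝ) ≠ 0 := by exact_mod_cast (by omega : m ≠ 0)
  rw [show ((2 * m : ℕ) : ℝ) * (π / m) = (2 : ℕ) * π by push_cast; field_simp,
    Real.sin_nat_mul_pi] at h
  exact (mul_eq_zero.mp h).resolve_right (sin_pi_div_pos hm).ne'

lemma chebU_two_mul_cos_two_mul_add_one (hm : 2 ≤ m) :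
    chebU (2 * Real.cos (π / m)) (2 * m + 1) = 1 := by
  have h := chebU_two_mul_cos_mul_sin (π / m) (2 * m + 1)
  have hm' : (m : ℝ) ≠ 0 := by exact_mod_cast (by omega : m ≠ 0)
  rw [show ((2 * m + 1 : ℕ) : ℝ) * (π / m) = π / m + 2 * π by push_cast; field_simp; ring,
    Real.sin_add_two_pi] at h
  exact (mul_eq_right₀ (sin_pi_div_pos hm).ne').mp h

end

namespace CoxeterSystem

variable {B W : Type*} [Group W] {Mx : CoxeterMatrix B} (cs : CoxeterSystem Mx W)

def IsPairWord (i j : B) (ω : List B) : Prop := ∀ x ∈ ω, x = i ∨ x = j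

/-- Membership in the standard parabolic subgroup `W_{i,j}` generated by `s i` and `s j`. -/
def IsPairElem (i j : B) (u : W) : Prop := ∃ ω, IsPairWord i j ω ∧ cs.wordProd ω = u

/-- The length of `u` with respect to the generators `s i`, `s j` of `W_{i,j}`
(`0` when `u ∉ W_{i,j}`). -/
noncomputable def pairLength (i j : B) (u : W) : ℕ :=
  sInf {n | ∃ ω, IsPairWord i j ω ∧ ω.length = n ∧ cs.wordProd ω = u}

def IsPairFactor (i j : B) (x v : W) : Prop :=
  cs.IsPairElem i j (v⁻¹ * x) ∧ cs.length x = cs.length v + cs.pairLength i j (v⁻¹ * x)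

lemma wordProd_alternatingWord_mul_simple {a b c : B} (hc : c = a ∨ c = b) {k : ℕ}
    (hk : Mx a b ≠ 0 → k ≤ Mx a b) :
    ∃ k' ≤ k + 1, (Mx a b ≠ 0 → k' ≤ Mx a b) ∧
      (cs.wordProd (alternatingWord a b k) * cs.simple c
          = cs.wordProd (alternatingWord a b k') ∨
        cs.wordProd (alternatingWord a b k) * cs.simple c
          = cs.wordProd (alternatingWord b a k')) := by
  have hm : Mx a b ≠ 0 → 1 ≤ Mx a b := Nat.one_le_iff_ne_zero.mpr
  rcases k with _ | k
  · refine ⟨1, le_rfl, hm, ?_⟩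
    rcases hc with rfl | rfl
    · exact Or.inr (by simp [alternatingWord])
    · exact Or.inl (by simp [alternatingWord])
  rw [alternatingWord_succ, wordProd_concat]
  by_cases hcb : c = b
  · subst hcb
    exact ⟨k, by omega, fun h => by have := hk h; omega,
      Or.inr (cs.simple_mul_simple_cancel_right c)⟩
  have hca : c = a := hc.resolve_right hcb
  subst hca
  by_cases hkm : Mx c b ≠ 0 ∧ k + 1 = Mx c b
  · -- the braid relation lets the word end in `c` instead, and then `s c` cancels
    refine ⟨k, by omega, fun h => by omega, Or.inl ?_⟩
    have hbraid := cs.wordProd_braidWord_eq c b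
    rw [braidWord, braidWord, Mx.symmetric b c, ← hkm.2, alternatingWord_succ,
      alternatingWord_succ, wordProd_concat, wordProd_concat] at hbraid
    rw [hbraid, cs.simple_mul_simple_cancel_right]
  · refine ⟨k + 2, le_rfl, fun h => ?_, Or.inr ?_⟩
    · have := hk h
      have := fun h' => hkm ⟨h, h'⟩
      omega
    · rw [alternatingWord_succ b c (k + 1), alternatingWord_succ, wordProd_concat,
        wordProd_concat]

variable {cs} {i j : B}

lemma mem_alternatingWord {a b x : B} {k : ℕ} (h : x ∈ alternatingWord a b k) :
    x = a ∨ x = b := by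
  induction k generalizing a b with
  | zero => simp [alternatingWord] at h
  | succ k ih =>
      rw [alternatingWord_succ, List.concat_eq_append, List.mem_append,
        List.mem_singleton] at h
      rcases h with h | h
      · exact (ih h).symm
      · exact Or.inr h

lemma isPairWord_alternatingWord (k : ℕ) : IsPairWord i j (alternatingWord i j k) :=
  fun _ => mem_alternatingWord

lemma isPairWord_alternatingWord' (k : ℕ) : IsPairWord i j (alternatingWord j i k) :=
  fun _ hx => (mem_alternatingWord hx).symm

lemma IsPairWord.cons {ω : List B} (hω : IsPairWord i j ω) {c : B} (hc : c = i ∨ c = j) :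
    IsPairWord i j (c :: ω) := by
  rintro x (_ | ⟨_, hx⟩)
  exacts [hc, hω x hx]

lemma IsPairWord.concat {ω : List B} (hω : IsPairWord i j ω) {c : B} (hc : c = i ∨ c = j) :
    IsPairWord i j (ω.concat c) := by
  intro x hx
  rw [List.concat_eq_append, List.mem_append, List.mem_singleton] at hx
  rcases hx with hx | rfl
  exacts [hω x hx, hc]

lemma IsPairElem.simple_mul {u : W} (hu : cs.IsPairElem i j u) {c : B} (hc : c = i ∨ c = j) :
    cs.IsPairElem i j (cs.simple c * u) := by
  obtain ⟨ω, hω, rfl⟩ := hu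
  exact ⟨c :: ω, hω.cons hc, cs.wordProd_cons c ω⟩

lemma IsPairElem.mul_simple {u : W} (hu : cs.IsPairElem i j u) {c : B} (hc : c = i ∨ c = j) :
    cs.IsPairElem i j (u * cs.simple c) := by
  obtain ⟨ω, hω, rfl⟩ := hu
  exact ⟨ω.concat c, hω.concat hc, cs.wordProd_concat c ω⟩

lemma pairLength_wordProd_le {ω : List B} (hω : IsPairWord i j ω) :
    cs.pairLength i j (cs.wordProd ω) ≤ ω.length :=
  Nat.sInf_le ⟨ω, hω, rfl, rfl⟩

lemma IsPairElem.exists_pairLength_eq {u : W} (hu : cs.IsPairElem i j u) :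
    ∃ ω, IsPairWord i j ω ∧ ω.length = cs.pairLength i j u ∧ cs.wordProd ω = u := by
  obtain ⟨ω, hω, hωu⟩ := hu
  exact Nat.sInf_mem (s := {n | ∃ ω, IsPairWord i j ω ∧ ω.length = n ∧ cs.wordProd ω = u})
    ⟨ω.length, ω, hω, rfl, hωu⟩

lemma IsPairElem.length_le_pairLength {u : W} (hu : cs.IsPairElem i j u) :
    cs.length u ≤ cs.pairLength i j u := by
  obtain ⟨ω, -, hlen, rfl⟩ := hu.exists_pairLength_eq
  exact hlen ▸ cs.length_wordProd_le ω

lemma IsPairElem.pairLength_simple_mul_le {u : W} (hu : cs.IsPairElem i j u) {c : B}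
    (hc : c = i ∨ c = j) : cs.pairLength i j (cs.simple c * u) ≤ cs.pairLength i j u + 1 := by
  obtain ⟨ω, hω, hlen, rfl⟩ := hu.exists_pairLength_eq
  rw [← cs.wordProd_cons, ← hlen]
  exact pairLength_wordProd_le (hω.cons hc)

lemma length_wordProd_mod_two (ω : List B) : cs.length (cs.wordProd ω) % 2 = ω.length % 2 := by
  induction ω with
  | nil => simp
  | cons c ω ih =>
      have h := cs.length_mul_mod_two (cs.simple c) (cs.wordProd ω)
      rw [cs.length_simple] at h
      rw [wordProd_cons, List.length_cons]
      omega

lemma IsPairElem.pairLength_mod_two {u : W} (hu : cs.IsPairElem i j u) :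
    cs.pairLength i j u % 2 = cs.length u % 2 := by
  obtain ⟨ω, -, hlen, rfl⟩ := hu.exists_pairLength_eq
  rw [length_wordProd_mod_two, hlen]

lemma IsPairWord.exists_wordProd_eq_alternatingWord {ω : List B} (hω : IsPairWord i j ω) :
    ∃ k ≤ ω.length, (Mx i j ≠ 0 → k ≤ Mx i j) ∧
      (cs.wordProd ω = cs.wordProd (alternatingWord i j k) ∨
        cs.wordProd ω = cs.wordProd (alternatingWord j i k)) := by
  induction ω using List.reverseRecOn with
  | nil => exact ⟨0, le_rfl, fun _ => Nat.zero_le _, Or.inl rfl⟩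
  | append_singleton ω c ih =>
      have hc : c = i ∨ c = j := hω c (by simp)
      obtain ⟨k, hkω, hkm, hrep⟩ := ih fun x hx => hω x (by simp [hx])
      rw [wordProd_append, wordProd_singleton, List.length_append, List.length_singleton]
      rcases hrep with hrep | hrep
      · obtain ⟨k', hk', hk'm, h⟩ := cs.wordProd_alternatingWord_mul_simple hc hkm
        exact ⟨k', by omega, hk'm, hrep ▸ h⟩
      · rw [Mx.symmetric i j] at hkm
        obtain ⟨k', hk', hk'm, h⟩ := cs.wordProd_alternatingWord_mul_simple hc.symm hkm
        rw [Mx.symmetric j i] at hk'm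
        exact ⟨k', by omega, hk'm, hrep ▸ h.symm⟩

lemma pairLength_wordProd_alternatingWord_le (k : ℕ) :
    cs.pairLength i j (cs.wordProd (alternatingWord i j k)) ≤ k ∧
      cs.pairLength i j (cs.wordProd (alternatingWord j i k)) ≤ k :=
  ⟨(pairLength_wordProd_le (isPairWord_alternatingWord k)).trans_eq (length_alternatingWord ..),
    (pairLength_wordProd_le (isPairWord_alternatingWord' k)).trans_eq (length_alternatingWord ..)⟩

lemma pairLength_wordProd_alternatingWord_succ_mul_simple (k : ℕ) :
    cs.pairLength i j (cs.wordProd (alternatingWord j i (k + 1)) * cs.simple i) ≤ k := by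
  rw [alternatingWord_succ, wordProd_concat, cs.simple_mul_simple_cancel_right]
  exact pairLength_wordProd_alternatingWord_le k |>.1

lemma IsPairElem.exists_alternatingWord_of_pairLength_lt {u : W} (hu : cs.IsPairElem i j u)
    (h : cs.pairLength i j u < cs.pairLength i j (u * cs.simple i)) :
    ∃ k, (Mx i j ≠ 0 → k < Mx i j) ∧ cs.wordProd (alternatingWord i j k) = u := by
  obtain ⟨ω, hω, hlen, rfl⟩ := hu.exists_pairLength_eq
  obtain ⟨k, hkω, hkm, hrep⟩ := hω.exists_wordProd_eq_alternatingWord (cs := cs)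
  have hk : k = ω.length := by
    refine le_antisymm hkω ?_
    rw [hlen]
    rcases hrep with hrep | hrep <;> rw [hrep]
    exacts [(pairLength_wordProd_alternatingWord_le k).1,
      (pairLength_wordProd_alternatingWord_le k).2]
  rcases k with _ | k
  · exact ⟨0, Nat.pos_of_ne_zero, by rcases hrep with hrep | hrep <;> exact hrep.symm⟩
  have hji : cs.wordProd ω ≠ cs.wordProd (alternatingWord j i (k + 1)) := fun h' => by
    have := pairLength_wordProd_alternatingWord_succ_mul_simple (cs := cs) (i := i) (j := j) k
    rw [← h'] at this
    omega
  have hij := hrep.resolve_right hji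
  refine ⟨k + 1, fun hm => lt_of_le_of_ne (hkm hm) fun hkm' => hji ?_, hij.symm⟩
  have hbraid := cs.wordProd_braidWord_eq i j
  rw [braidWord, braidWord, Mx.symmetric j i, ← hkm'] at hbraid
  rw [hij, hbraid]

variable {x v : W}

lemma IsPairFactor.mul_simple (hv : cs.IsPairFactor i j x v) {c : B} (hc : c = i ∨ c = j)
    (hlt : cs.length (v * cs.simple c) < cs.length v) :
    cs.IsPairFactor i j x (v * cs.simple c) := by
  obtain ⟨hu, hlen⟩ := hv
  have hinv : (v * cs.simple c)⁻¹ * x = cs.simple c * (v⁻¹ * x) := by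
    rw [mul_inv_rev, cs.inv_simple, mul_assoc]
  have hsu := hu.simple_mul hc
  rw [IsPairFactor, hinv]
  refine ⟨hsu, le_antisymm ?_ ?_⟩
  · calc cs.length x = cs.length (v * cs.simple c * (cs.simple c * (v⁻¹ * x))) := by
          rw [mul_assoc, cs.simple_mul_simple_cancel_left, mul_inv_cancel_left]
      _ ≤ cs.length (v * cs.simple c) + cs.length (cs.simple c * (v⁻¹ * x)) :=
        cs.length_mul_le _ _
      _ ≤ _ := Nat.add_le_add_left hsu.length_le_pairLength _
  · have := hu.pairLength_simple_mul_le hc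
    have := cs.length_mul_simple v c
    omega

lemma IsPairFactor.pairLength_lt (hv : cs.IsPairFactor i j x v)
    (hx : cs.length x < cs.length (x * cs.simple i)) :
    cs.pairLength i j (v⁻¹ * x) < cs.pairLength i j (v⁻¹ * x * cs.simple i) := by
  obtain ⟨hu, hlen⟩ := hv
  have hui := hu.mul_simple (Or.inl rfl)
  by_contra! hle
  have hpar₁ := hu.pairLength_mod_two
  have hpar₂ := hui.pairLength_mod_two
  have := cs.length_mul_simple (v⁻¹ * x) i
  have : cs.length (x * cs.simple i) ≤ cs.length v + cs.pairLength i j (v⁻¹ * x * cs.simple i) :=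
    calc cs.length (x * cs.simple i) = cs.length (v * (v⁻¹ * x * cs.simple i)) := by group
      _ ≤ cs.length v + cs.length (v⁻¹ * x * cs.simple i) := cs.length_mul_le _ _
      _ ≤ _ := Nat.add_le_add_left hui.length_le_pairLength _
  omega

lemma isPairFactor_mul_simple_right (hx : cs.length (x * cs.simple j) < cs.length x) :
    cs.IsPairFactor i j x (x * cs.simple j) := by
  have hinv : (x * cs.simple j)⁻¹ * x = cs.simple j := by
    rw [mul_inv_rev, cs.inv_simple, mul_assoc, inv_mul_cancel, mul_one]
  have hj : IsPairWord i j [j] := by simp [IsPairWord]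
  have hpl : cs.pairLength i j (cs.simple j) = 1 := by
    refine le_antisymm (by simpa using pairLength_wordProd_le (cs := cs) hj) ?_
    simpa using IsPairElem.length_le_pairLength ⟨[j], hj, cs.wordProd_singleton j⟩
  rw [IsPairFactor, hinv, hpl]
  refine ⟨⟨[j], hj, cs.wordProd_singleton j⟩, ?_⟩
  have := cs.length_mul_simple x j
  omega

theorem exists_isPairFactor (hj : cs.length (x * cs.simple j) < cs.length x) :
    ∃ v, cs.IsPairFactor i j x v ∧ cs.length v < cs.length x ∧
      cs.length v < cs.length (v * cs.simple i) ∧ cs.length v < cs.length (v * cs.simple j) := by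
  obtain ⟨v, hv, hmin⟩ := (InvImage.wf cs.length wellFounded_lt).has_min
    {v | cs.IsPairFactor i j x v} ⟨_, isPairFactor_mul_simple_right hj⟩
  have hasc : ∀ c, c = i ∨ c = j → cs.length v < cs.length (v * cs.simple c) := by
    intro c hc
    by_contra! hle
    exact hmin _ (hv.mul_simple hc (lt_of_le_of_ne hle (cs.length_mul_simple_ne v c)))
      (lt_of_le_of_ne hle (cs.length_mul_simple_ne v c))
  refine ⟨v, hv, ?_, hasc i (Or.inl rfl), hasc j (Or.inr rfl)⟩
  obtain ⟨hu, hlen⟩ := hv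
  by_contra! hle
  have hu1 : v⁻¹ * x = 1 := by
    have := hu.length_le_pairLength
    exact cs.length_eq_zero_iff.mp (by omega)
  have := hasc j (Or.inr rfl)
  rw [inv_mul_eq_one.mp hu1] at this
  omega

end CoxeterSystem

namespace CoxeterMat

open CoxeterSystem

variable {S : Type*} (M : CoxeterMat S)

lemma c_self (s : S) : M.c s s = 2 := by
  simp [c, M.diagonal s]

lemma c_comm (s t : S) : M.c s t = M.c t s := by
  rw [c, c, M.symmetric]

lemma two_le_m {s t : S} (hst : s ≠ t) (hm : M.m s t ≠ 0) : 2 ≤ M.m s t := by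
  have := M.off_diagonal s t hst
  omega

lemma neg_c_of_m_eq_zero {s t : S} (hm : M.m s t = 0) : -M.c s t = 2 := by
  simp [c, hm]

lemma neg_c_of_m_ne_zero {s t : S} (hm : M.m s t ≠ 0) :
    -M.c s t = 2 * Real.cos (π / M.m s t) := by
  simp [c, hm]

lemma cos_pi_div_m_mem_Ico {s t : S} (hst : s ≠ t) (hm : M.m s t ≠ 0) :
    Real.cos (π / M.m s t) ∈ Set.Ico 0 1 := by
  have h2 : (2 : ℝ) ≤ M.m s t := by exact_mod_cast M.two_le_m hst hm
  have hpos : 0 < π / M.m s t := by positivity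
  have hle : π / M.m s t ≤ π / 2 := div_le_div_of_nonneg_left pi_pos.le two_pos h2
  refine ⟨Real.cos_nonneg_of_mem_Icc ⟨by linarith, hle⟩, ?_⟩
  rw [← Real.cos_zero]
  exact Real.cos_lt_cos_of_nonneg_of_le_pi le_rfl (by linarith [pi_pos]) hpos

lemma c_nonpos {s t : S} (hst : s ≠ t) : M.c s t ≤ 0 := by
  by_cases hm : M.m s t = 0
  · linarith [M.neg_c_of_m_eq_zero hm]
  · linarith [M.neg_c_of_m_ne_zero hm, (M.cos_pi_div_m_mem_Ico hst hm).1]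

lemma c_sq_lt_four {s t : S} (hst : s ≠ t) (hm : M.m s t ≠ 0) : M.c s t ^ 2 < 4 := by
  obtain ⟨h0, h1⟩ := M.cos_pi_div_m_mem_Ico hst hm
  have := M.neg_c_of_m_ne_zero hm
  nlinarith

lemma sroot_apply_nonneg (s t : S) : 0 ≤ sroot s t := by
  classical
  rw [sroot, Finsupp.single_apply]
  split_ifs <;> norm_num

lemma sroot_apply_self (s : S) : sroot s s = 1 := Finsupp.single_eq_same

lemma sroot_apply_of_ne {s t : S} (h : s ≠ t) : sroot s t = 0 := Finsupp.single_eq_of_ne h.symm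

lemma ext_sroot {f g : (S →₀ ℝ) ≃ₗ[ℝ] (S →₀ ℝ)} (h : ∀ s, f (sroot s) = g (sroot s)) :
    f = g :=
  LinearEquiv.toLinearMap_injective (Finsupp.basisSingleOne.ext h)

lemma bform_sroot (s t : S) : M.bform (sroot s) (sroot t) = M.c s t := by
  simp [bform, sroot]

lemma bform_comm (x y : S →₀ ℝ) : M.bform x y = M.bform y x := by
  have : M.bform.flip = M.bform :=
    LinearMap.ext_basis Finsupp.basisSingleOne Finsupp.basisSingleOne fun s t => by
      change M.bform (sroot t) (sroot s) = M.bform (sroot s) (sroot t)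
      rw [bform_sroot, bform_sroot, c_comm]
  rw [← LinearMap.flip_apply (f := M.bform), this]

lemma sigma_apply (s : S) (x : S →₀ ℝ) :
    M.sigma s x = x - M.bform (sroot s) x • sroot s := rfl

lemma sigma_sroot (s t : S) : M.sigma s (sroot t) = sroot t - M.c s t • sroot s := by
  rw [sigma_apply, bform_sroot]

lemma sigma_sroot_self (s : S) : M.sigma s (sroot s) = -sroot s := by
  rw [sigma_sroot, c_self]
  module

lemma sigma_of_bform_eq_zero {s : S} {x : S →₀ ℝ} (hx : M.bform (sroot s) x = 0) :
    M.sigma s x = x := by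
  rw [sigma_apply, hx, zero_smul, sub_zero]

lemma sigma_involutive (s : S) : Function.Involutive (M.sigma s) := by
  intro x
  have h : M.bform (sroot s) (M.sigma s x) = -M.bform (sroot s) x := by
    rw [sigma_apply, map_sub, map_smul, bform_sroot, c_self, smul_eq_mul]
    ring
  rw [sigma_apply (x := M.sigma s x), h, sigma_apply]
  module

noncomputable def sigmaE (s : S) : (S →₀ ℝ) ≃ₗ[ℝ] (S →₀ ℝ) :=
  LinearEquiv.ofInvolutive (M.sigma s) (M.sigma_involutive s)

@[simp] lemma sigmaE_apply (s : S) (x : S →₀ ℝ) : M.sigmaE s x = M.sigma s x := rfl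

lemma sigmaE_mem_Wgrp (s : S) : M.sigmaE s ∈ M.Wgrp :=
  Subgroup.subset_closure ⟨s, rfl⟩

lemma sigmaE_mul_self (s : S) : M.sigmaE s * M.sigmaE s = 1 :=
  LinearEquiv.ext (M.sigma_involutive s)

lemma bform_sigma_sigma (s : S) (x y : S →₀ ℝ) :
    M.bform (M.sigma s x) (M.sigma s y) = M.bform x y := by
  simp only [sigma_apply, map_sub, map_smul, LinearMap.sub_apply, LinearMap.smul_apply,
    bform_sroot, c_self, smul_eq_mul, M.bform_comm x (sroot s)]
  ring

lemma bform_apply_apply_of_mem_Wgrp {w : (S →₀ ℝ) ≃ₗ[ℝ] (S →₀ ℝ)} (hw : w ∈ M.Wgrp)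
    (x y : S →₀ ℝ) : M.bform (w x) (w y) = M.bform x y := by
  induction hw using Subgroup.closure_induction generalizing x y with
  | mem w hw =>
      obtain ⟨s, hs⟩ := hw
      have hw : ⇑w = M.sigma s := congrArg DFunLike.coe hs
      rw [hw, bform_sigma_sigma]
  | one => rfl
  | mul u v _ _ hu hv => rw [LinearEquiv.mul_apply, LinearEquiv.mul_apply, hu, hv]
  | inv u _ hu => simpa using (hu (u⁻¹ x) (u⁻¹ y)).symm

lemma sigmaE_commute {s t : S} (hst : M.c s t = 0) : Commute (M.sigmaE s) (M.sigmaE t) := by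
  have hts : M.c t s = 0 := by rw [c_comm, hst]
  refine ext_sroot fun u => ?_
  simp only [LinearEquiv.mul_apply, sigmaE_apply, sigma_sroot, map_sub, map_smul, hst, hts,
    zero_smul, sub_zero]
  abel

lemma chebU_neg_c_nonneg {s t : S} (hst : s ≠ t) {k : ℕ} (hk : M.m s t ≠ 0 → k ≤ M.m s t) :
    0 ≤ chebU (-M.c s t) k := by
  by_cases hm : M.m s t = 0
  · rw [M.neg_c_of_m_eq_zero hm, chebU_two]
    positivity
  · rw [M.neg_c_of_m_ne_zero hm]
    exact chebU_two_mul_cos_nonneg (M.two_le_m hst hm) (hk hm)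

lemma sigmaE_mul_sigmaE_pow_sroot {i j : S} (k : ℕ) :
    ((M.sigmaE i * M.sigmaE j) ^ k) (sroot i)
      = chebU (-M.c i j) (2 * k + 1) • sroot i + chebU (-M.c i j) (2 * k) • sroot j ∧
    ((M.sigmaE i * M.sigmaE j) ^ k) (sroot j)
      = (-chebU (-M.c i j) (2 * k)) • sroot i
        + (chebU (-M.c i j) (2 * k + 1) + M.c i j * chebU (-M.c i j) (2 * k)) • sroot j := by
  set a := -M.c i j with ha
  have hc : M.c i j = -a := by rw [ha, neg_neg]
  have hi : (M.sigmaE i * M.sigmaE j) (sroot i) = (a * a - 1) • sroot i + a • sroot j := by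
    simp only [LinearEquiv.mul_apply, sigmaE_apply, sigma_sroot, map_sub, map_smul,
      M.c_comm j i, c_self, hc]
    module
  have hj : (M.sigmaE i * M.sigmaE j) (sroot j) = (-a) • sroot i + (-1 : ℝ) • sroot j := by
    simp only [LinearEquiv.mul_apply, sigmaE_apply, sigma_sroot_self, map_neg, sigma_sroot, hc]
    module
  induction k with
  | zero => constructor <;> simp [chebU]
  | succ k ih =>
      have r₁ := chebU_add_two a (2 * k)
      have r₂ := chebU_add_two a (2 * k + 1)
      rw [show 2 * (k + 1) = 2 * k + 2 by ring, show 2 * k + 2 + 1 = 2 * k + 1 + 2 by ring,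
        pow_succ, LinearEquiv.mul_apply (_ ^ k), LinearEquiv.mul_apply (_ ^ k), hi, hj]
      simp only [map_add, map_smul, ih.1, ih.2, r₁, r₂, hc]
      constructor <;> module

lemma sigmaE_mul_sigmaE_pow_m_sroot {i j : S} (hij : i ≠ j) (hm : M.m i j ≠ 0) :
    ((M.sigmaE i * M.sigmaE j) ^ M.m i j) (sroot i) = sroot i ∧
    ((M.sigmaE i * M.sigmaE j) ^ M.m i j) (sroot j) = sroot j := by
  have h0 : chebU (-M.c i j) (2 * M.m i j) = 0 := by
    rw [M.neg_c_of_m_ne_zero hm]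
    exact chebU_two_mul_cos_two_mul (M.two_le_m hij hm)
  have h1 : chebU (-M.c i j) (2 * M.m i j + 1) = 1 := by
    rw [M.neg_c_of_m_ne_zero hm]
    exact chebU_two_mul_cos_two_mul_add_one (M.two_le_m hij hm)
  obtain ⟨hi, hj⟩ := M.sigmaE_mul_sigmaE_pow_sroot (i := i) (j := j) (M.m i j)
  rw [hi, hj, h0, h1]
  constructor <;> module

/-- For `m_{i,j} < ∞` the form is nondegenerate on `ℝ α_i + ℝ α_j`: its Gram determinant is
`4 - c_{i,j}² > 0`. -/
lemma exists_bform_sub_eq_zero {i j : S} (hij : i ≠ j) (hm : M.m i j ≠ 0) (x : S →₀ ℝ) :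
    ∃ p q : ℝ, M.bform (sroot i) (x - p • sroot i - q • sroot j) = 0 ∧
      M.bform (sroot j) (x - p • sroot i - q • sroot j) = 0 := by
  set c := M.c i j
  have hd : 4 - c ^ 2 ≠ 0 := (sub_pos.mpr (M.c_sq_lt_four hij hm)).ne'
  refine ⟨(2 * M.bform (sroot i) x - c * M.bform (sroot j) x) / (4 - c ^ 2),
    (2 * M.bform (sroot j) x - c * M.bform (sroot i) x) / (4 - c ^ 2), ?_, ?_⟩ <;>
  · simp only [map_sub, map_smul, bform_sroot, c_self, M.c_comm j i, smul_eq_mul]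
    field_simp
    ring

lemma sigmaE_mul_sigmaE_pow_m {i j : S} (hij : i ≠ j) (hm : M.m i j ≠ 0) :
    (M.sigmaE i * M.sigmaE j) ^ M.m i j = 1 := by
  refine LinearEquiv.ext fun x => ?_
  obtain ⟨p, q, hzi, hzj⟩ := M.exists_bform_sub_eq_zero hij hm x
  set z := x - p • sroot i - q • sroot j
  have hz : (M.sigmaE i * M.sigmaE j) z = z := by
    rw [LinearEquiv.mul_apply, sigmaE_apply, sigmaE_apply, M.sigma_of_bform_eq_zero hzj,
      M.sigma_of_bform_eq_zero hzi]
  have hx : x = p • sroot i + q • sroot j + z := by simp only [z]; abel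
  obtain ⟨hi, hj⟩ := M.sigmaE_mul_sigmaE_pow_m_sroot hij hm
  rw [hx, map_add, map_add, map_smul, map_smul, hi, hj, LinearEquiv.pow_apply,
    Function.iterate_fixed hz]
  rfl

def toCoxeterMatrix : CoxeterMatrix S where
  M s t := M.m s t
  isSymm := Matrix.IsSymm.ext fun s t => M.symmetric t s
  diagonal := M.diagonal
  off_diagonal := M.off_diagonal

lemma isLiftable_sigmaE : M.toCoxeterMatrix.IsLiftable M.sigmaE := by
  intro i j
  change (M.sigmaE i * M.sigmaE j) ^ M.m i j = 1
  by_cases hij : i = j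
  · rw [hij, M.diagonal, pow_one, sigmaE_mul_self]
  by_cases hm : M.m i j = 0
  · rw [hm, pow_zero]
  · exact M.sigmaE_mul_sigmaE_pow_m hij hm

noncomputable abbrev cs : CoxeterSystem M.toCoxeterMatrix M.toCoxeterMatrix.Group :=
  M.toCoxeterMatrix.toCoxeterSystem

noncomputable def geomRep : M.toCoxeterMatrix.Group →* (S →₀ ℝ) ≃ₗ[ℝ] (S →₀ ℝ) :=
  M.cs.lift ⟨M.sigmaE, M.isLiftable_sigmaE⟩

@[simp] lemma geomRep_simple (s : S) : M.geomRep (M.cs.simple s) = M.sigmaE s :=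
  M.cs.lift_apply_simple M.isLiftable_sigmaE s

lemma Wgrp_le_range_geomRep : M.Wgrp ≤ M.geomRep.range := by
  refine (Subgroup.closure_le _).mpr ?_
  rintro w ⟨s, hs⟩
  exact ⟨M.cs.simple s, by rw [geomRep_simple]; exact LinearEquiv.toLinearMap_injective hs.symm⟩

lemma geomRep_wordProd_alternatingWord_sroot {i j : S} (hij : i ≠ j) {k : ℕ}
    (hk : M.m i j ≠ 0 → k < M.m i j) :
    ∃ a b : ℝ, 0 ≤ a ∧ 0 ≤ b ∧
      M.geomRep (M.cs.wordProd (alternatingWord i j k)) (sroot i) = a • sroot i + b • sroot j := by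
  have hnn : ∀ n ≤ k + 1, 0 ≤ chebU (-M.c i j) n := fun n hn =>
    M.chebU_neg_c_nonneg hij fun hm => by have := hk hm; omega
  have hpow := fun r => (M.sigmaE_mul_sigmaE_pow_sroot (i := i) (j := j) r).1
  rcases Nat.even_or_odd' k with ⟨r, rfl | rfl⟩
  · rw [prod_alternatingWord_eq_mul_pow, if_pos (even_two_mul r), one_mul,
      Nat.mul_div_cancel_left r two_pos, map_pow, map_mul, geomRep_simple, geomRep_simple, hpow]
    exact ⟨_, _, hnn _ le_rfl, hnn _ (by omega), rfl⟩
  · rw [prod_alternatingWord_eq_mul_pow, if_neg (Nat.not_even_two_mul_add_one r),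
      show (2 * r + 1) / 2 = r by omega, map_mul, map_pow, map_mul, geomRep_simple,
      geomRep_simple, LinearEquiv.mul_apply, hpow]
    refine ⟨chebU (-M.c i j) (2 * r + 1), chebU (-M.c i j) (2 * r + 2), hnn _ (by omega),
      hnn _ le_rfl, ?_⟩
    rw [chebU_add_two]
    simp only [sigmaE_apply, map_add, map_smul, sigma_sroot, c_self, M.c_comm j i]
    module

lemma geomRep_sroot_of_pairLength_lt {i j : S} (hij : i ≠ j) {u : M.toCoxeterMatrix.Group}
    (hu : M.cs.IsPairElem i j u)
    (h : M.cs.pairLength i j u < M.cs.pairLength i j (u * M.cs.simple i)) :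
    ∃ a b : ℝ, 0 ≤ a ∧ 0 ≤ b ∧ M.geomRep u (sroot i) = a • sroot i + b • sroot j := by
  obtain ⟨k, hk, rfl⟩ := hu.exists_alternatingWord_of_pairLength_lt h
  exact M.geomRep_wordProd_alternatingWord_sroot hij hk

/-- Humphreys, *Reflection groups and Coxeter groups*, Theorem 5.4: a minimal factorization
`x = v u` with `u` in the parabolic subgroup `W_{t,j}` (`j` a right descent of `x`) reduces the
claim to the induction hypothesis for `v` and a computation in the dihedral group `W_{t,j}`. -/
theorem geomRep_sroot_nonneg {x : M.toCoxeterMatrix.Group} {t : S}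
    (h : M.cs.length x < M.cs.length (x * M.cs.simple t)) (p : S) :
    0 ≤ M.geomRep x (sroot t) p := by
  induction hn : M.cs.length x using Nat.strong_induction_on generalizing x t with
  | _ n ih =>
  by_cases hx : x = 1
  · simpa [hx] using sroot_apply_nonneg t p
  obtain ⟨j, hj⟩ := M.cs.exists_rightDescent_of_ne_one hx
  have htj : t ≠ j := by
    rintro rfl
    exact (lt_asymm h) hj
  obtain ⟨v, hv, hvx, hvt, hvj⟩ := exists_isPairFactor hj
  obtain ⟨a, b, ha, hb, hab⟩ := M.geomRep_sroot_of_pairLength_lt htj hv.1 (hv.pairLength_lt h)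
  have hsplit : M.geomRep x (sroot t) = a • M.geomRep v (sroot t) + b • M.geomRep v (sroot j) := by
    rw [← mul_inv_cancel_left v x, map_mul, LinearEquiv.mul_apply, hab, map_add, map_smul,
      map_smul]
  rw [hsplit, Finsupp.add_apply, Finsupp.smul_apply, Finsupp.smul_apply, smul_eq_mul,
    smul_eq_mul]
  have := ih _ (hn ▸ hvx) hvt rfl
  have := ih _ (hn ▸ hvx) hvj rfl
  positivity

lemma neg_mem_Phi {a : S →₀ ℝ} (ha : a ∈ M.Phi) : -a ∈ M.Phi := by
  obtain ⟨w, hw, s, rfl⟩ := ha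
  refine ⟨w * M.sigmaE s, mul_mem hw (M.sigmaE_mem_Wgrp s), s, ?_⟩
  rw [LinearEquiv.mul_apply, sigmaE_apply, sigma_sroot_self, map_neg]

theorem mem_PhiPos_or_neg_mem_PhiPos {a : S →₀ ℝ} (ha : a ∈ M.Phi) :
    a ∈ M.PhiPos ∨ -a ∈ M.PhiPos := by
  obtain ⟨w, hw, t, rfl⟩ := ha
  obtain ⟨x, rfl⟩ := M.Wgrp_le_range_geomRep hw
  rcases lt_or_gt_of_ne (M.cs.length_mul_simple_ne x t).symm with h | h
  · exact Or.inl ⟨⟨_, hw, t, rfl⟩, M.geomRep_sroot_nonneg h⟩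
  · refine Or.inr ⟨M.neg_mem_Phi ⟨_, hw, t, rfl⟩, fun p => ?_⟩
    have hxt : M.geomRep x (sroot t) = -M.geomRep (x * M.cs.simple t) (sroot t) := by
      rw [map_mul, LinearEquiv.mul_apply, geomRep_simple, sigmaE_apply, sigma_sroot_self,
        map_neg, neg_neg]
    rw [hxt, neg_neg]
    exact M.geomRep_sroot_nonneg (by rwa [M.cs.simple_mul_simple_cancel_right]) p

lemma permV_sroot (g : Equiv.Perm S) (s : S) : permV g (sroot s) = sroot (g s) :=
  Finsupp.domLCongr_single g s 1

lemma permV_apply (g : Equiv.Perm S) (x : S →₀ ℝ) (p : S) : permV g x p = x (g⁻¹ p) := rfl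

lemma eq_sroot_of_mem_PhiPos {a : S →₀ ℝ} (ha : a ∈ M.PhiPos) {r : S}
    (h : ∀ p ≠ r, a p = 0) : a = sroot r := by
  obtain ⟨⟨w, hw, t, rfl⟩, hnn⟩ := ha
  have hsingle : w (sroot t) = w (sroot t) r • sroot r := by
    ext p
    by_cases hp : p = r
    · simp [hp, sroot_apply_self]
    · simp [h p hp, sroot_apply_of_ne (Ne.symm hp)]
  have hnorm := M.bform_apply_apply_of_mem_Wgrp hw (sroot t) (sroot t)
  rw [hsingle, map_smul, map_smul, LinearMap.smul_apply, bform_sroot, bform_sroot, c_self,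
    c_self, smul_eq_mul, smul_eq_mul] at hnorm
  have hr : w (sroot t) r = 1 := by nlinarith [hnn r]
  rw [hsingle, hr, one_smul]

variable {G : Subgroup (Equiv.Perm S)}

lemma mul_mem_WfixG {u w : (S →₀ ℝ) ≃ₗ[ℝ] (S →₀ ℝ)} (hu : u ∈ M.WfixG G) (hw : w ∈ M.WfixG G) :
    u * w ∈ M.WfixG G :=
  ⟨mul_mem hu.1 hw.1, fun g hg => Commute.mul_right (hu.2 g hg) (hw.2 g hg)⟩

lemma inv_mem_WfixG {w : (S →₀ ℝ) ≃ₗ[ℝ] (S →₀ ℝ)} (hw : w ∈ M.WfixG G) : w⁻¹ ∈ M.WfixG G :=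
  ⟨inv_mem hw.1, fun g hg => Commute.inv_right (hw.2 g hg)⟩

lemma apply_permV_of_mem_WfixG {w : (S →₀ ℝ) ≃ₗ[ℝ] (S →₀ ℝ)} (hw : w ∈ M.WfixG G)
    {g : Equiv.Perm S} (hg : g ∈ G) (x : S →₀ ℝ) : w (permV g x) = permV g (w x) :=
  (LinearEquiv.congr_fun (hw.2 g hg) x).symm

theorem c_apply_eq_zero (hA : ∀ a ∈ M.PhiPos, ∃ w ∈ M.WfixG G, ∃ s : S, a = w (sroot s))
    {g : Equiv.Perm S} (hg : g ∈ G) {t : S} (hgt : g t ≠ t) : M.c t (g t) = 0 := by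
  set c := M.c t (g t)
  by_contra hc
  have hc : c < 0 := lt_of_le_of_ne (M.c_nonpos hgt.symm) hc
  have hβ : M.sigma t (sroot (g t)) ∈ M.PhiPos := by
    refine ⟨⟨M.sigmaE t, M.sigmaE_mem_Wgrp t, g t, rfl⟩, fun p => ?_⟩
    rw [sigma_sroot, Finsupp.sub_apply, Finsupp.smul_apply, smul_eq_mul]
    nlinarith [sroot_apply_nonneg (g t) p, sroot_apply_nonneg t p]
  obtain ⟨w, hw, r, hwr⟩ := hA _ hβ
  set δ := w⁻¹ (sroot t)
  have hδΦ : δ ∈ M.Phi := ⟨w⁻¹, inv_mem hw.1, t, rfl⟩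
  have hgδ : permV g δ = w⁻¹ (sroot (g t)) := by
    rw [← permV_sroot, M.apply_permV_of_mem_WfixG (M.inv_mem_WfixG hw) hg]
  have hgδΦ : permV g δ ∈ M.Phi := ⟨w⁻¹, inv_mem hw.1, g t, hgδ⟩
  have hr : ∀ p, sroot r p = δ (g⁻¹ p) - c * δ p := by
    intro p
    have : sroot r = w⁻¹ (M.sigma t (sroot (g t))) := by simp [hwr]
    rw [this, sigma_sroot, map_sub, map_smul, ← hgδ]
    rfl
  rcases M.mem_PhiPos_or_neg_mem_PhiPos hδΦ with hpos | hneg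
  · have hzero : ∀ p ≠ r, δ p = 0 ∧ δ (g⁻¹ p) = 0 := by
      intro p hp
      have := hr p
      rw [sroot_apply_of_ne (Ne.symm hp)] at this
      have := hpos.2 p
      have := hpos.2 (g⁻¹ p)
      constructor <;> nlinarith
    have h1 := M.eq_sroot_of_mem_PhiPos hpos fun p hp => (hzero p hp).1
    have h2 := M.eq_sroot_of_mem_PhiPos ⟨hgδΦ, fun p => hpos.2 _⟩ fun p hp => (hzero p hp).2
    have := hr r
    rw [← permV_apply, h2, h1, sroot_apply_self] at this
    linarith
  · have := hr r
    rw [sroot_apply_self] at this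
    have h1 := hneg.2 r
    have h2 := hneg.2 (g⁻¹ r)
    rw [Finsupp.neg_apply] at h1 h2
    nlinarith

noncomputable def prodSigmaE (X : Finset S) (hX : (X : Set S).Pairwise fun t t' => M.c t t' = 0) :
    (S →₀ ℝ) ≃ₗ[ℝ] (S →₀ ℝ) :=
  X.noncommProd M.sigmaE (hX.mono' fun _ _ h => M.sigmaE_commute h)

lemma prodSigmaE_mem_Wgrp (X : Finset S) (hX : (X : Set S).Pairwise fun t t' => M.c t t' = 0) :
    M.prodSigmaE X hX ∈ M.Wgrp :=
  M.Wgrp.noncommProd_mem _ fun t _ => M.sigmaE_mem_Wgrp t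

lemma prodSigmaE_sroot [DecidableEq S] (X : Finset S)
    (hX : (X : Set S).Pairwise fun t t' => M.c t t' = 0) (s : S) :
    M.prodSigmaE X hX (sroot s) = sroot s - ∑ t ∈ X, M.c t s • sroot t := by
  induction X using Finset.induction_on with
  | empty => simp [prodSigmaE]
  | insert a X ha ih =>
      have hX' : (X : Set S).Pairwise fun t t' => M.c t t' = 0 :=
        hX.mono (by simp [Set.subset_insert])
      have hfix : ∀ t ∈ X, M.sigma a (M.c t s • sroot t) = M.c t s • sroot t := fun t ht => by
        rw [map_smul, sigma_sroot, hX (by simp) (by simp [ht]) (ne_of_mem_of_not_mem ht ha).symm,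
          zero_smul, sub_zero]
      rw [prodSigmaE, Finset.noncommProd_insert_of_notMem _ _ _ _ ha, LinearEquiv.mul_apply,
        show X.noncommProd M.sigmaE _ = M.prodSigmaE X hX' from rfl, ih hX', sigmaE_apply,
        map_sub, sigma_sroot, map_sum, Finset.sum_congr rfl hfix, Finset.sum_insert ha]
      abel

lemma prodSigmaE_sroot_of_mem (X : Finset S) (hX : (X : Set S).Pairwise fun t t' => M.c t t' = 0)
    {s : S} (hs : s ∈ X) : M.prodSigmaE X hX (sroot s) = -sroot s := by
  classical
  rw [prodSigmaE_sroot, Finset.sum_eq_single_of_mem s hs fun t ht hts => by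
    rw [hX ht hs hts, zero_smul], c_self]
  module

lemma prodSigmaE_mem_WfixG (hG : ∀ g ∈ G, ∀ s t, M.m (g s) (g t) = M.m s t) (X : Finset S)
    (hX : (X : Set S).Pairwise fun t t' => M.c t t' = 0) (hXG : ∀ g ∈ G, ∀ t, t ∈ X ↔ g t ∈ X) :
    M.prodSigmaE X hX ∈ M.WfixG G := by
  classical
  refine ⟨M.prodSigmaE_mem_Wgrp X hX, fun g hg => ext_sroot fun p => ?_⟩
  rw [LinearEquiv.mul_apply, LinearEquiv.mul_apply, permV_sroot, prodSigmaE_sroot,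
    prodSigmaE_sroot, map_sub, permV_sroot, map_sum]
  congr 1
  refine Finset.sum_equiv g (hXG g hg) fun t _ => ?_
  rw [map_smul, permV_sroot, c, c, hG g hg]

theorem exists_mem_WfixG_apply_sroot_eq_neg (hG : ∀ g ∈ G, ∀ s t, M.m (g s) (g t) = M.m s t)
    (hA : ∀ a ∈ M.PhiPos, ∃ w ∈ M.WfixG G, ∃ s : S, a = w (sroot s)) {s : S}
    (hfin : {t | ∃ g ∈ G, g s = t}.Finite) :
    ∃ u ∈ M.WfixG G, u (sroot s) = -sroot s := by
  set X := hfin.toFinset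
  have hmem : ∀ t, t ∈ X ↔ ∃ g ∈ G, g s = t := fun t => hfin.mem_toFinset
  have hX : (X : Set S).Pairwise fun t t' => M.c t t' = 0 := by
    intro t ht t' ht' htt'
    obtain ⟨g₁, hg₁, rfl⟩ := (hmem t).mp ht
    obtain ⟨g₂, hg₂, rfl⟩ := (hmem t').mp ht'
    have h := M.c_apply_eq_zero hA (G.mul_mem hg₂ (G.inv_mem hg₁)) (t := g₁ s)
    simp only [Equiv.Perm.coe_mul, Equiv.Perm.coe_inv, Function.comp_apply,
      Equiv.symm_apply_apply] at h
    exact h (Ne.symm htt')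
  have hXG : ∀ g ∈ G, ∀ t, t ∈ X ↔ g t ∈ X := by
    intro g hg t
    simp only [hmem]
    refine ⟨fun ⟨h, hh, hht⟩ => ⟨g * h, G.mul_mem hg hh, by simp [hht]⟩,
      fun ⟨h, hh, hht⟩ => ⟨g⁻¹ * h, G.mul_mem (G.inv_mem hg) hh, by simp [hht]⟩⟩
  exact ⟨_, M.prodSigmaE_mem_WfixG hG X hX hXG,
    M.prodSigmaE_sroot_of_mem X hX ((hmem s).mpr ⟨1, G.one_mem, rfl⟩)⟩

end CoxeterMat

/-- Let `G` be a group of symmetries of `Γ` with all orbits of `S` finite. Then every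
positive root is of the form `w(α_s)` with `w ∈ W^G` and `s ∈ S` if and only if every root
is of this form. -/
theorem stmt19 {S : Type*} (M : CoxeterMat S) (G : Subgroup (Equiv.Perm S))
    (hG : ∀ g ∈ G, ∀ s t, M.m (g s) (g t) = M.m s t)
    (hfin : ∀ s : S, {t | ∃ g ∈ G, g s = t}.Finite) :
    (∀ a ∈ M.PhiPos, ∃ w ∈ M.WfixG G, ∃ s : S, a = w (sroot s)) ↔
    (∀ a ∈ M.Phi, ∃ w ∈ M.WfixG G, ∃ s : S, a = w (sroot s)) := by
  refine ⟨fun hA a ha => ?_, fun hB a ha => hB a ha.1⟩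
  rcases M.mem_PhiPos_or_neg_mem_PhiPos ha with hpos | hneg
  · exact hA a hpos
  obtain ⟨w, hw, s, hs⟩ := hA (-a) hneg
  obtain ⟨u, hu, hus⟩ := M.exists_mem_WfixG_apply_sroot_eq_neg hG hA (hfin s)
  refine ⟨w * u, M.mul_mem_WfixG hw hu, s, ?_⟩
  rw [LinearEquiv.mul_apply, hus, map_neg, ← hs, neg_neg]
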